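/- Let X be a set, n ≥ 2, and F : X^n → ℝ a nonnegative function that is symmetric in its last n−1 arguments and satisfies F(u₁, u₂, u₃, …, uₙ) ≤ F(u₁, u₁, u₃, …, uₙ)^{1/2} · F(u₂, u₂, u₃, …, uₙ)^{1/2} for all arguments. Then for all u₁, …, uₙ ∈ X one has F(u₁, u₂, …, uₙ) ≤ ∏_{i=1}^{n} F(uᵢ, uᵢ, …, uᵢ)^{1/n}. -/
import Mathlib

/-- Persson's abstract Cauchy--Schwarz inequality. -/
theorem stmt_0 {X : Type*} (n : ℕ) [NeZero n] (hn : 2 ≤ n) (F : (Fin n → X) → ℝ)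
    (hF0 : ∀ u, 0 ≤ F u)
    (hsym : ∀ (u : Fin n → X) (σ : Equiv.Perm (Fin n)), σ 0 = 0 → F (u ∘ σ) = F u)
    (hCS : ∀ u : Fin n → X,
      F u ≤ (F (Function.update u 1 (u 0))) ^ ((1:ℝ)/2) *
            (F (Function.update u 0 (u 1))) ^ ((1:ℝ)/2)) :
    ∀ u : Fin n → X, F u ≤ ∏ i : Fin n, (F (fun _ => u i)) ^ ((1:ℝ)/(n:ℝ)) := by
  intro u
  classical
  have h10 : (1 : Fin n) ≠ 0 := by
    intro h
    have h1 : (1 : Fin n).val = 1 := by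
      rw [Fin.val_one']; exact Nat.mod_eq_of_lt (by omega)
    rw [h] at h1
    simp at h1
  -- symmetry for index maps
  have sym' : ∀ (f : Fin n → Fin n) (σ : Equiv.Perm (Fin n)), σ 0 = 0 →
      F (u ∘ (f ∘ σ)) = F (u ∘ f) := by
    intro f σ hσ
    have h := hsym (u ∘ f) σ hσ
    rwa [Function.comp_assoc] at h
  -- Cauchy-Schwarz for index maps
  have CS' : ∀ g : Fin n → Fin n,
      F (u ∘ g) ≤ F (u ∘ Function.update g 1 (g 0)) ^ ((1:ℝ)/2) *
                  F (u ∘ Function.update g 0 (g 1)) ^ ((1:ℝ)/2) := by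
    intro g
    have h1 : Function.update (u ∘ g) 1 ((u ∘ g) 0) = u ∘ Function.update g 1 (g 0) := by
      funext a
      rcases eq_or_ne a 1 with h | h <;> simp [Function.update_apply, h]
    have h2 : Function.update (u ∘ g) 0 ((u ∘ g) 1) = u ∘ Function.update g 0 (g 1) := by
      funext a
      rcases eq_or_ne a 0 with h | h <;> simp [Function.update_apply, h]
    have h := hCS (u ∘ g)
    rwa [h1, h2] at h
  -- count of positions agreeing with position 0
  set cnt : (Fin n → Fin n) → ℕ :=
    fun f => (Finset.univ.filter fun j => u (f j) = u (f 0)).card with hcnt_def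
  have cnt_perm : ∀ (f : Fin n → Fin n) (σ : Equiv.Perm (Fin n)), σ 0 = 0 →
      cnt (f ∘ σ) = cnt f := by
    intro f σ hσ
    simp only [hcnt_def, Function.comp_apply, hσ]
    rw [show (Finset.univ.filter fun j => u (f (σ j)) = u (f 0))
        = (Finset.univ.filter fun j => u (f j) = u (f 0)).image σ.symm from ?_]
    · rw [Finset.card_image_of_injective _ σ.symm.injective]
    · ext a
      simp [Equiv.symm_apply_eq]
  have cnt_update : ∀ (g : Fin n → Fin n), u (g 1) ≠ u (g 0) →
      cnt (Function.update g 1 (g 0)) = cnt g + 1 := by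
    intro g hg
    simp only [hcnt_def]
    have h0 : Function.update g 1 (g 0) 0 = g 0 := Function.update_of_ne h10.symm _ _
    rw [show (Finset.univ.filter fun j => u (Function.update g 1 (g 0) j)
          = u (Function.update g 1 (g 0) 0))
        = insert 1 (Finset.univ.filter fun j => u (g j) = u (g 0)) from ?_]
    · rw [Finset.card_insert_of_notMem (by simp [hg])]
    · ext a
      rcases eq_or_ne a 1 with h | h <;>
        simp [h, h0, Function.update_apply]
  -- key step: extract a mismatching position
  have exists_bad : ∀ (f : Fin n → Fin n), cnt f < n → ∃ j, j ≠ 0 ∧ u (f j) ≠ u (f 0) := by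
    intro f hf
    by_contra h
    push_neg at h
    have hall : ∀ j, u (f j) = u (f 0) := by
      intro j
      rcases eq_or_ne j 0 with rfl | hj
      · rfl
      · exact h j hj
    have : cnt f = n := by
      simp only [hcnt_def]
      rw [Finset.filter_true_of_mem (fun x _ => hall x)]
      simp
    omega
  have hconst : ∀ (f : Fin n → Fin n), cnt f = n → F (u ∘ f) = F (fun _ => u (f 0)) := by
    intro f hf
    have hall : ∀ j, u (f j) = u (f 0) := by
      by_contra h
      push_neg at h
      obtain ⟨j, hj⟩ := h
      have : cnt f < n := by
        simp only [hcnt_def]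
        have : (Finset.univ.filter fun j => u (f j) = u (f 0)) ⊂ Finset.univ :=
          ⟨Finset.filter_subset _ _, fun hsub => hj (by simpa using hsub (Finset.mem_univ j))⟩
        calc (Finset.univ.filter fun j => u (f j) = u (f 0)).card
            < Finset.univ.card := Finset.card_lt_card this
          _ = n := by simp
      omega
    exact congrArg F (funext fun j => hall j)
  -- Part 1: if the diagonal at position 0's value vanishes, F vanishes
  have Z : ∀ (k : ℕ) (f : Fin n → Fin n), F (fun _ => u (f 0)) = 0 → n ≤ cnt f + k →
      F (u ∘ f) ≤ 0 := by
    intro k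
    induction k with
    | zero =>
      intro f hf hc
      have hcn : cnt f = n := by
        have : cnt f ≤ n := by
          simp only [hcnt_def]
          calc (Finset.univ.filter fun j => u (f j) = u (f 0)).card
              ≤ Finset.univ.card := Finset.card_filter_le _ _
            _ = n := by simp
        omega
      rw [hconst f hcn, hf]
    | succ k ih =>
      intro f hf hc
      rcases le_or_gt n (cnt f + k) with h | h
      · exact ih f hf h
      · have hcf : cnt f < n := by omega
        obtain ⟨j, hj0, hjv⟩ := exists_bad f hcf
        set σ := Equiv.swap (1 : Fin n) j with hσdef
        have hσ0 : σ 0 = 0 := Equiv.swap_apply_of_ne_of_ne h10.symm (Ne.symm hj0)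
        set g := f ∘ σ with hgdef
        have hg0 : g 0 = f 0 := by simp [hgdef, hσ0]
        have hg1 : g 1 = f j := by simp [hgdef, hσdef, Equiv.swap_apply_left]
        have hmis : u (g 1) ≠ u (g 0) := by rw [hg0, hg1]; exact hjv
        have hcg : cnt g = cnt f := cnt_perm f σ hσ0
        set A := Function.update g 1 (g 0) with hAdef
        have hA0 : A 0 = g 0 := Function.update_of_ne h10.symm _ _
        have hAz : F (fun _ => u (A 0)) = 0 := by rw [hA0, hg0]; exact hf
        have hAc : n ≤ cnt A + k := by
          rw [hAdef, cnt_update g hmis, hcg]; omega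
        have hFA : F (u ∘ A) = 0 :=
          le_antisymm (ih A hAz hAc) (hF0 _)
        calc F (u ∘ f) = F (u ∘ g) := (sym' f σ hσ0).symm
          _ ≤ F (u ∘ A) ^ ((1:ℝ)/2) * F (u ∘ Function.update g 0 (g 1)) ^ ((1:ℝ)/2) := CS' g
          _ = 0 := by rw [hFA, Real.zero_rpow (by norm_num), zero_mul]
  -- main case split
  by_cases hzero : ∃ i, F (fun _ => u i) = 0
  · obtain ⟨i, hi⟩ := hzero
    have hRHS : (∏ i : Fin n, (F (fun _ => u i)) ^ ((1:ℝ)/(n:ℝ))) = 0 := by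
      apply Finset.prod_eq_zero (Finset.mem_univ i)
      rw [hi, Real.zero_rpow]
      positivity
    rw [hRHS]
    rcases eq_or_ne i 0 with rfl | hi0
    · have := Z n id (by simpa using hi) (by omega)
      simpa using this
    · -- move i into position 0 first
      set σ := Equiv.swap (1 : Fin n) i with hσdef
      have hσ0 : σ 0 = 0 := Equiv.swap_apply_of_ne_of_ne h10.symm (Ne.symm hi0)
      set g : Fin n → Fin n := (id : Fin n → Fin n) ∘ σ with hgdef
      have hg1 : g 1 = i := by simp [hgdef, hσdef, Equiv.swap_apply_left]
      set B := Function.update g 0 (g 1) with hBdef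
      have hB0 : B 0 = i := by rw [hBdef, Function.update_self, hg1]
      have hFB : F (u ∘ B) = 0 := by
        refine le_antisymm (Z n B ?_ (by omega)) (hF0 _)
        rw [hB0]; exact hi
      calc F u = F (u ∘ g) := by
            rw [sym' id σ hσ0]; simp
        _ ≤ F (u ∘ Function.update g 1 (g 0)) ^ ((1:ℝ)/2) * F (u ∘ B) ^ ((1:ℝ)/2) := CS' g
        _ = 0 := by rw [hFB, Real.zero_rpow (by norm_num), mul_zero]
  · -- all diagonal values positive
    push_neg at hzero
    have hd : ∀ i, 0 < F (fun _ => u i) := fun i => (hF0 _).lt_of_ne (Ne.symm (hzero i))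
    set e : ℝ := (1:ℝ)/(n:ℝ) with hedef
    set T : (Fin n → Fin n) → ℝ := fun f => ∏ j, (F (fun _ => u (f j))) ^ e with hTdef
    have hT : ∀ f, 0 < T f := by
      intro f
      exact Finset.prod_pos fun j _ => Real.rpow_pos_of_pos (hd _) e
    have hne : (n:ℝ) ≠ 0 := Nat.cast_ne_zero.mpr (by omega)
    have hall_of_cnt : ∀ (f : Fin n → Fin n), cnt f = n → ∀ j, u (f j) = u (f 0) := by
      intro f hf
      by_contra h
      push_neg at h
      obtain ⟨j, hj⟩ := h
      have hlt : cnt f < n := by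
        simp only [hcnt_def]
        have hss : (Finset.univ.filter fun j => u (f j) = u (f 0)) ⊂ Finset.univ :=
          ⟨Finset.filter_subset _ _, fun hsub => hj (by simpa using hsub (Finset.mem_univ j))⟩
        calc (Finset.univ.filter fun j => u (f j) = u (f 0)).card
            < Finset.univ.card := Finset.card_lt_card hss
          _ = n := by simp
      omega
    have cnt_le : ∀ f : Fin n → Fin n, cnt f ≤ n := by
      intro f
      simp only [hcnt_def]
      calc (Finset.univ.filter fun j => u (f j) = u (f 0)).card
          ≤ Finset.univ.card := Finset.card_filter_le _ _
        _ = n := by simp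
    have hTconst : ∀ f, cnt f = n → T f = F (fun _ => u (f 0)) := by
      intro f hf
      have hall := hall_of_cnt f hf
      calc T f = ∏ _j : Fin n, (F (fun _ => u (f 0))) ^ e := by
            simp only [hTdef]
            exact Finset.prod_congr rfl fun j _ => by
              rw [show (fun _ : Fin n => u (f j)) = (fun _ => u (f 0)) from funext fun _ => hall j]
        _ = ((F (fun _ => u (f 0))) ^ e) ^ (n : ℕ) := by
            rw [Finset.prod_const, Finset.card_univ, Fintype.card_fin]
        _ = F (fun _ => u (f 0)) := by
            rw [← Real.rpow_natCast ((F (fun _ => u (f 0))) ^ e) n,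
              ← Real.rpow_mul (hd _).le]
            rw [show e * (n:ℕ) = 1 by rw [hedef]; field_simp]
            exact Real.rpow_one _
    have hTperm : ∀ (f : Fin n → Fin n) (σ : Equiv.Perm (Fin n)), T (f ∘ σ) = T f := by
      intro f σ
      simp only [hTdef, Function.comp_apply]
      exact Fintype.prod_equiv σ _ _ fun j => rfl
    have hTupd : ∀ (g : Fin n → Fin n) (i x : Fin n),
        T (Function.update g i x) =
          (F (fun _ => u x)) ^ e * ∏ j ∈ (Finset.univ \ {i}), (F (fun _ => u (g j))) ^ e := by
      intro g i x
      have hfun : (fun j => (F (fun _ => u (Function.update g i x j))) ^ e)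
          = Function.update (fun j => (F (fun _ => u (g j))) ^ e) i ((F (fun _ => u x)) ^ e) := by
        funext j
        rcases eq_or_ne j i with rfl | h
        · simp
        · simp [Function.update_apply, h]
      simp only [hTdef]
      rw [hfun]
      exact Finset.prod_update_of_mem (Finset.mem_univ i)
        (fun j => (F fun _ => u (g j)) ^ e) ((F fun _ => u x) ^ e)
    have hTsplit : ∀ (g : Fin n → Fin n) (i : Fin n),
        T g = (F (fun _ => u (g i))) ^ e * ∏ j ∈ (Finset.univ \ {i}), (F (fun _ => u (g j))) ^ e := by
      intro g i
      conv_lhs => rw [← Function.update_eq_self i g]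
      rw [hTupd]
    have hTAB : ∀ g : Fin n → Fin n,
        T (Function.update g 1 (g 0)) * T (Function.update g 0 (g 1)) = T g * T g := by
      intro g
      rw [hTupd g 1 (g 0), hTupd g 0 (g 1)]
      nth_rewrite 1 [hTsplit g 1]
      nth_rewrite 1 [hTsplit g 0]
      ring
    set r : (Fin n → Fin n) → ℝ := fun f => F (u ∘ f) / T f with hrdef
    have cnt_const : ∀ i : Fin n, cnt (fun _ => i) = n := by
      intro i
      simp [hcnt_def]
    have hr1 : r (fun _ => (0 : Fin n)) = 1 := by
      simp only [hrdef]
      rw [hTconst _ (cnt_const 0), hconst _ (cnt_const 0)]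
      exact div_self (hd _).ne'
    have P : ∀ (k : ℕ) (f : Fin n → Fin n), (∀ g, r g ≤ r f) → n ≤ cnt f + k → r f ≤ 1 := by
      intro k
      induction k with
      | zero =>
        intro f _ hc
        have hcn : cnt f = n := le_antisymm (cnt_le f) (by omega)
        simp only [hrdef]
        rw [hTconst f hcn, hconst f hcn]
        exact le_of_eq (div_self (hd _).ne')
      | succ k ih =>
        intro f hmax hc
        rcases le_or_gt n (cnt f + k) with h | h
        · exact ih f hmax h
        · have hcf : cnt f < n := by omega
          obtain ⟨j, hj0, hjv⟩ := exists_bad f hcf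
          set σ := Equiv.swap (1 : Fin n) j with hσdef
          have hσ0 : σ 0 = 0 := Equiv.swap_apply_of_ne_of_ne h10.symm (Ne.symm hj0)
          set g := f ∘ σ with hgdef
          have hg0 : g 0 = f 0 := by simp [hgdef, hσ0]
          have hg1 : g 1 = f j := by simp [hgdef, hσdef, Equiv.swap_apply_left]
          have hmis : u (g 1) ≠ u (g 0) := by rw [hg0, hg1]; exact hjv
          have hcg : cnt g = cnt f := by rw [hgdef]; exact cnt_perm f σ hσ0
          set A := Function.update g 1 (g 0) with hAdef
          set B := Function.update g 0 (g 1) with hBdef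
          have hmax' : ∀ g' : Fin n → Fin n, F (u ∘ g') * T f ≤ F (u ∘ f) * T g' := by
            intro g'
            have h1 := hmax g'
            simp only [hrdef] at h1
            rwa [div_le_div_iff₀ (hT g') (hT f)] at h1
          have hrf1 : T f ≤ F (u ∘ f) := by
            have h0 := hmax (fun _ => (0 : Fin n))
            rw [hr1] at h0
            simp only [hrdef] at h0
            rw [le_div_iff₀ (hT f)] at h0
            linarith
          have hFfpos : 0 < F (u ∘ f) := lt_of_lt_of_le (hT f) hrf1
          have hFg' : F (u ∘ g) = F (u ∘ f) := by rw [hgdef]; exact sym' f σ hσ0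
          have hTg : T g = T f := by rw [hgdef]; exact hTperm f σ
          have hTAB' : T A * T B = T f * T f := by
            rw [hAdef, hBdef, hTAB g, hTg]
          have hsq : F (u ∘ f) ^ 2 ≤ F (u ∘ A) * F (u ∘ B) := by
            rw [hAdef, hBdef, ← hFg']
            have h2 : (F (u ∘ Function.update g 1 (g 0)) ^ ((1:ℝ)/2) *
                F (u ∘ Function.update g 0 (g 1)) ^ ((1:ℝ)/2)) ^ 2
                = F (u ∘ Function.update g 1 (g 0)) * F (u ∘ Function.update g 0 (g 1)) := by
              rw [mul_pow, ← Real.rpow_natCast (F (u ∘ Function.update g 1 (g 0)) ^ ((1:ℝ)/2)) 2,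
                ← Real.rpow_natCast (F (u ∘ Function.update g 0 (g 1)) ^ ((1:ℝ)/2)) 2,
                ← Real.rpow_mul (hF0 _), ← Real.rpow_mul (hF0 _)]
              norm_num
            calc F (u ∘ g) ^ 2
                ≤ (F (u ∘ Function.update g 1 (g 0)) ^ ((1:ℝ)/2) *
                    F (u ∘ Function.update g 0 (g 1)) ^ ((1:ℝ)/2)) ^ 2 :=
                  pow_le_pow_left₀ (hF0 _) (CS' g) 2
              _ = _ := h2
          have s4 : F (u ∘ f) * T f ≤ F (u ∘ A) * T B := by
            have h1 : (F (u ∘ f) * T f) * F (u ∘ f) ≤ (F (u ∘ A) * T B) * F (u ∘ f) := by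
              calc (F (u ∘ f) * T f) * F (u ∘ f) = F (u ∘ f) ^ 2 * T f := by ring
                _ ≤ (F (u ∘ A) * F (u ∘ B)) * T f :=
                    mul_le_mul_of_nonneg_right hsq (hT f).le
                _ = F (u ∘ A) * (F (u ∘ B) * T f) := by ring
                _ ≤ F (u ∘ A) * (F (u ∘ f) * T B) :=
                    mul_le_mul_of_nonneg_left (hmax' B) (hF0 _)
                _ = (F (u ∘ A) * T B) * F (u ∘ f) := by ring
            exact le_of_mul_le_mul_right h1 hFfpos
          have hFA : F (u ∘ f) * T A ≤ F (u ∘ A) * T f := by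
            have h1 : (F (u ∘ f) * T A) * T f ≤ (F (u ∘ A) * T f) * T f := by
              calc (F (u ∘ f) * T A) * T f = (F (u ∘ f) * T f) * T A := by ring
                _ ≤ (F (u ∘ A) * T B) * T A := mul_le_mul_of_nonneg_right s4 (hT A).le
                _ = F (u ∘ A) * (T A * T B) := by ring
                _ = F (u ∘ A) * (T f * T f) := by rw [hTAB']
                _ = (F (u ∘ A) * T f) * T f := by ring
            exact le_of_mul_le_mul_right h1 (hT f)
          have hrA_max : ∀ g' : Fin n → Fin n, r g' ≤ r A := by
            intro g'
            have h1 := hmax' g'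
            simp only [hrdef]
            rw [div_le_div_iff₀ (hT g') (hT A)]
            have h2 : (F (u ∘ g') * T A) * T f ≤ (F (u ∘ A) * T g') * T f := by
              calc (F (u ∘ g') * T A) * T f = (F (u ∘ g') * T f) * T A := by ring
                _ ≤ (F (u ∘ f) * T g') * T A := mul_le_mul_of_nonneg_right h1 (hT A).le
                _ = (F (u ∘ f) * T A) * T g' := by ring
                _ ≤ (F (u ∘ A) * T f) * T g' := mul_le_mul_of_nonneg_right hFA (hT g').le
                _ = (F (u ∘ A) * T g') * T f := by ring
            exact le_of_mul_le_mul_right h2 (hT f)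
          have hAc : n ≤ cnt A + k := by
            rw [hAdef, cnt_update g hmis, hcg]
            omega
          exact (hrA_max f).trans (ih A hrA_max hAc)
    obtain ⟨f₀, hf₀mem, hmaxmem⟩ :=
      Finset.exists_max_image (Finset.univ : Finset (Fin n → Fin n)) r ⟨id, Finset.mem_univ id⟩
    have hmax : ∀ g, r g ≤ r f₀ := fun g => hmaxmem g (Finset.mem_univ g)
    have hP : r f₀ ≤ 1 := P n f₀ hmax (by have := cnt_le f₀; omega)
    have hid : r id ≤ 1 := (hmax id).trans hP
    simp only [hrdef] at hid
    rw [div_le_one (hT id)] at hid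
    calc F u = F (u ∘ id) := by rw [Function.comp_id]
      _ ≤ T id := hid
      _ = ∏ i : Fin n, (F (fun _ => u i)) ^ e := by simp [hTdef]
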